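/- For every t > 0 and every x ∈ ℝ one has ∂_t ψ(t,x) ≥ 0. Consequently, for every fixed z ≥ c the map t ↦ U(t,z) = (1/β)·log ψ(t, z−c) is nondecreasing on (0,∞). -/

import Mathlib

/-!
Write `u = x / (σ √(2t))` and `a = β σ √(t/2)`, so that
`ψ = erf u + e^{a² - 2ua} (1 - erf (u - a))` with `2ua = βx` independent of `t`.
Differentiating in `t`, the two Gaussian terms coming from the derivatives of `erf u` and
`erf (u - a)` carry the same factor `e^{-u²}` and the `u'` parts cancel, leaving
`(2/√π) e^{-u²} a' + (β²σ²/2) e^{a² - 2ua} (1 - erf (u - a))`, a sum of nonnegative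
terms since `a' ≥ 0` and `erf < 1`. For `x ≥ 0` also `ψ > 0`, so `log ψ` is nondecreasing too.
-/

open Filter Topology

namespace Real

noncomputable def erf (x : ℝ) : ℝ := 2 / √π * ∫ y in (0 : ℝ)..x, exp (-y ^ 2)

theorem continuous_exp_neg_sq : Continuous fun y : ℝ => exp (-y ^ 2) := by fun_prop

theorem hasDerivAt_erf (x : ℝ) : HasDerivAt erf (2 / √π * exp (-x ^ 2)) x :=
  (intervalIntegral.integral_hasDerivAt_right (continuous_exp_neg_sq.intervalIntegrable 0 x)
    (continuous_exp_neg_sq.stronglyMeasurableAtFilter _ _)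
    continuous_exp_neg_sq.continuousAt).const_mul _

theorem strictMono_erf : StrictMono erf :=
  strictMono_of_deriv_pos fun x => by rw [(hasDerivAt_erf x).deriv]; positivity

theorem erf_zero : erf 0 = 0 := by simp [erf]

theorem tendsto_erf_atTop : Tendsto erf atTop (𝓝 1) := by
  have hint : MeasureTheory.IntegrableOn (fun y : ℝ => exp (-y ^ 2)) (Set.Ioi 0) := by
    simpa using (integrable_exp_neg_mul_sq one_pos).integrableOn
  have hlim :=
    (MeasureTheory.intervalIntegral_tendsto_integral_Ioi 0 hint tendsto_id).const_mul (2 / √π)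
  have hgauss : ∫ y in Set.Ioi (0 : ℝ), exp (-y ^ 2) = √π / 2 := by
    simpa using integral_gaussian_Ioi 1
  rw [hgauss, div_mul_div_cancel₀' two_ne_zero, div_self (sqrt_pos.2 pi_pos).ne'] at hlim
  exact hlim

theorem erf_lt_one (x : ℝ) : erf x < 1 :=
  (strictMono_erf (lt_add_one x)).trans_le
    (strictMono_erf.monotone.ge_of_tendsto tendsto_erf_atTop _)

theorem erf_nonneg {x : ℝ} (hx : 0 ≤ x) : 0 ≤ erf x :=
  erf_zero ▸ strictMono_erf.monotone hx

theorem hasDerivAt_erf_add_exp_mul_one_sub_erf {u a e : ℝ → ℝ} {u' a' e' t : ℝ}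
    (hu : HasDerivAt u u' t) (ha : HasDerivAt a a' t) (he : HasDerivAt e e' t)
    (hgauss : e t - (u t - a t) ^ 2 = -u t ^ 2) :
    HasDerivAt (fun s => erf (u s) + exp (e s) * (1 - erf (u s - a s)))
      (2 / √π * exp (-u t ^ 2) * a' + exp (e t) * e' * (1 - erf (u t - a t))) t := by
  have h := ((hasDerivAt_erf _).comp t hu).add
    (he.exp.mul (((hasDerivAt_erf _).comp t (hu.sub ha)).const_sub 1))
  have hexp : exp (e t) * exp (-(u t - a t) ^ 2) = exp (-u t ^ 2) := by
    rw [← exp_add]; exact congrArg exp (by linarith)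
  refine h.congr_deriv ?_
  simp only [Function.comp_apply, Pi.sub_apply]
  linear_combination -(2 / √π * (u' - a')) * hexp

end Real

open Real

noncomputable def psi (σ β t x : ℝ) : ℝ :=
  erf (x / (σ * √(2 * t))) +
    exp (-β * x + β ^ 2 * σ ^ 2 * t / 2) *
      (1 - erf (x / (σ * √(2 * t)) - β * σ * √t / √2))

theorem hasDerivAt_psi {σ : ℝ} (hσ : 0 < σ) (β x : ℝ) {t : ℝ} (ht : 0 < t) :
    HasDerivAt (fun s => psi σ β s x)
      (2 / √π * exp (-(x / (σ * √(2 * t))) ^ 2) * (β * σ / (2 * √(2 * t))) +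
        exp (-β * x + β ^ 2 * σ ^ 2 * t / 2) * (β ^ 2 * σ ^ 2 / 2) *
          (1 - erf (x / (σ * √(2 * t)) - β * σ * √t / √2))) t := by
  have hsqrt2t : √(2 * t) = √2 * √t := sqrt_mul zero_le_two t
  have hu : HasDerivAt (fun s => x / (σ * √(2 * s))) _ t :=
    (hasDerivAt_const t x).div
      ((((hasDerivAt_id t).const_mul 2).sqrt (by simp [ht.ne'])).const_mul σ) (by positivity)
  have ha : HasDerivAt (fun s => β * σ * √s / √2) (β * σ / (2 * √(2 * t))) t := by
    refine (((hasDerivAt_sqrt ht.ne').const_mul (β * σ)).div_const √2).congr_deriv ?_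
    rw [hsqrt2t]; field_simp
  have he : HasDerivAt (fun s => -β * x + β ^ 2 * σ ^ 2 * s / 2) (β ^ 2 * σ ^ 2 / 2) t := by
    simpa using (((hasDerivAt_id t).const_mul (β ^ 2 * σ ^ 2)).div_const 2).const_add (-β * x)
  refine hasDerivAt_erf_add_exp_mul_one_sub_erf hu ha he ?_
  rw [hsqrt2t]
  field_simp
  rw [sq_sqrt ht.le, sq_sqrt zero_le_two]
  ring

theorem deriv_psi_nonneg {σ β : ℝ} (hσ : 0 < σ) (hβ : 0 ≤ β) (x : ℝ) {t : ℝ}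
    (ht : 0 < t) :
    0 ≤ deriv (fun s => psi σ β s x) t := by
  rw [(hasDerivAt_psi hσ β x ht).deriv]
  have := erf_lt_one (x / (σ * √(2 * t)) - β * σ * √t / √2)
  have : 0 < √(2 * t) := sqrt_pos.2 (by positivity)
  positivity

theorem monotoneOn_psi {σ β : ℝ} (hσ : 0 < σ) (hβ : 0 ≤ β) (x : ℝ) :
    MonotoneOn (fun t => psi σ β t x) (Set.Ioi 0) :=
  monotoneOn_of_deriv_nonneg (convex_Ioi 0)
    (fun _ ht => (hasDerivAt_psi hσ β x ht).continuousAt.continuousWithinAt)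
    (fun _ ht =>
      (hasDerivAt_psi hσ β x (interior_subset ht)).differentiableAt.differentiableWithinAt)
    (fun _ ht => deriv_psi_nonneg hσ hβ x (interior_subset ht))

theorem psi_pos {σ : ℝ} (hσ : 0 < σ) (β : ℝ) {t x : ℝ} (ht : 0 < t) (hx : 0 ≤ x) :
    0 < psi σ β t x := by
  have : 0 < √(2 * t) := sqrt_pos.2 (by positivity)
  have := erf_nonneg (x := x / (σ * √(2 * t))) (by positivity)
  have := erf_lt_one (x / (σ * √(2 * t)) - β * σ * √t / √2)
  unfold psi
  positivity

theorem psi_time_monotone_general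
    (σ γ κ c : ℝ) (hσ : 0 < σ) (hκ : 0 < κ)
    (β : ℝ) (hβ : β = γ ^ 2 / (2 * κ * σ ^ 2))
    (erf : ℝ → ℝ)
    (herf : ∀ x : ℝ, erf x = (2 / Real.sqrt Real.pi) * ∫ y in (0:ℝ)..x, Real.exp (-y ^ 2))
    (ψ : ℝ → ℝ → ℝ)
    (hψ : ∀ t x : ℝ, ψ t x =
      erf (x / (σ * Real.sqrt (2 * t))) +
        Real.exp (-β * x + β ^ 2 * σ ^ 2 * t / 2) *
          (1 - erf (x / (σ * Real.sqrt (2 * t)) - β * σ * Real.sqrt t / Real.sqrt 2))) :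
    (∀ t : ℝ, 0 < t → ∀ x : ℝ, 0 ≤ deriv (fun s => ψ s x) t) ∧
      (∀ z : ℝ, c ≤ z →
        MonotoneOn (fun t => (1 / β) * Real.log (ψ t (z - c))) (Set.Ioi 0)) := by
  have hβ0 : 0 ≤ β := hβ ▸ by positivity
  obtain rfl : erf = Real.erf := funext herf
  obtain rfl : ψ = psi σ β := funext fun t => funext (hψ t)
  refine ⟨fun t ht x => deriv_psi_nonneg hσ hβ0 x ht, fun z hz s hs t ht hst => ?_⟩
  have hx : 0 ≤ z - c := sub_nonneg.2 hz
  exact mul_le_mul_of_nonneg_left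
    (log_le_log (psi_pos hσ β hs hx) (monotoneOn_psi hσ hβ0 (z - c) hs ht hst)) (by positivity)

/-- For every t > 0 and every x ∈ ℝ one has ∂_t ψ(t,x) ≥ 0.
Consequently, for every fixed z ≥ c the map t ↦ U(t,z) = (1/β)·log ψ(t, z−c) is
nondecreasing on (0,∞). -/
theorem psi_time_monotone
    (σ γ κ c : ℝ) (hσ : 0 < σ) (hγ : 0 < γ) (hκ : 0 < κ)
    (β : ℝ) (hβ : β = γ ^ 2 / (2 * κ * σ ^ 2))
    (erf : ℝ → ℝ)
    (herf : ∀ x : ℝ, erf x = (2 / Real.sqrt Real.pi) * ∫ y in (0:ℝ)..x, Real.exp (-y ^ 2))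
    (ψ : ℝ → ℝ → ℝ)
    (hψ : ∀ t x : ℝ, ψ t x =
      erf (x / (σ * Real.sqrt (2 * t))) +
        Real.exp (-β * x + β ^ 2 * σ ^ 2 * t / 2) *
          (1 - erf (x / (σ * Real.sqrt (2 * t)) - β * σ * Real.sqrt t / Real.sqrt 2))) :
    (∀ t : ℝ, 0 < t → ∀ x : ℝ, 0 ≤ deriv (fun s => ψ s x) t) ∧
      (∀ z : ℝ, c ≤ z →
        MonotoneOn (fun t => (1 / β) * Real.log (ψ t (z - c))) (Set.Ioi 0)) :=
  psi_time_monotone_general σ γ κ c hσ hκ β hβ erf herf ψ hψ
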